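/- For every chain of subsets [n] = K_1 ⊋ K_2 ⊋ ⋯ ⊋ K_{m+1} = ∅, the set O_{K_1,…,K_{m+1}} is stable under the action of T_n and T_n acts transitively on it. Consequently, the nonempty sets O_{K_1,…,K_{m+1}} are precisely the orbits of the T_n-action on Y_n. -/

import Mathlib

/-!
The relations `a^I_i a^J_j = a^I_j a^J_i` (`i, j ∈ I ⊆ J`) hold on `ρ(T)` and are closed, so they
hold on `Y`. If `K_ℓ` is the last member of the chain of `p ∈ Y` containing `I`, then the
`K_ℓ`-component of `p` does not vanish on `I`, and the relations make the `I`-component its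
restriction. Hence `p` is determined by its chain together with the coordinates `a^{K_ℓ}_i`,
`i ∈ K_ℓ \ K_{ℓ+1}`, which are all nonzero. Two points of `Y` with the same chain therefore
differ by the torus element whose `i`-th coordinate is the ratio of these coordinates at the
level of `i`. Conversely the torus acts by coordinatewise scaling, which is continuous, keeps
`ρ(T)` inside itself and does not change which coordinates vanish, so it preserves `Y` and chains.
-/

noncomputable section

open Projectivization

instance projTopology {K V : Type*} [DivisionRing K] [AddCommGroup V] [Module K V]
    [TopologicalSpace V] : TopologicalSpace (Projectivization K V) :=
  inferInstanceAs (TopologicalSpace (Quotient (projectivizationSetoid K V)))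

/-- The index type of nonempty subsets of `ι`. -/
abbrev NES (ι : Type) := {I : Set ι // I.Nonempty}

/-- The ambient product `P = ∏_{∅ ≠ I ⊆ ι} ℙ^I` of projective spaces. -/
abbrev PSp (ι : Type) := (I : NES ι) → Projectivization ℂ (↥I.1 → ℂ)

/-- The subset of `ℙ^ι` consisting of points all of whose homogeneous coordinates
are nonzero (an algebraic torus). -/
def torusSet (ι : Type) : Set (Projectivization ℂ (ι → ℂ)) := {x | ∀ i, x.rep i ≠ 0}

open Classical in
/-- The `i`-th homogeneous coordinate (for the chosen representative `rep`) of the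
`K`-component of a point `p ∈ P`; junk value `0` if `i ∉ K` or `K = ∅`. -/
def pcoord (ι : Type) (p : PSp ι) (K : Set ι) (i : ι) : ℂ :=
  if h : K.Nonempty ∧ i ∈ K then (p ⟨K, h.1⟩).rep ⟨i, h.2⟩ else 0

lemma pcoord_exists_ne (ι : Type) (p : PSp ι) (K : Set ι) (hK : K.Nonempty) :
    ∃ i, i ∈ K ∧ pcoord ι p K i ≠ 0 := by
  obtain ⟨x, hx⟩ := Function.ne_iff.mp (Projectivization.rep_nonzero (p ⟨K, hK⟩))
  refine ⟨x.1, x.2, ?_⟩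
  rw [pcoord, dif_pos ⟨hK, x.2⟩]
  simpa using hx

/-- The map `ρ` from the torus to `P`, whose `I`-component is given by restricting
the homogeneous coordinates. -/
def rho (ι : Type) (x : ↥(torusSet ι)) : PSp ι := fun I =>
  Projectivization.mk ℂ (fun i : ↥I.1 => x.1.rep i.1) <| by
    obtain ⟨i, hi⟩ := I.2
    intro h0
    exact x.2 i (by simpa using congrFun h0 ⟨i, hi⟩)

/-- `Y`, the closure of `ρ(T)` in `P`. -/
def Yn (ι : Type) : Set (PSp ι) := closure (Set.range (rho ι))

/-- The chain of a point `p ∈ P`: `chainK ι p 0 = univ` (this is `K₁` in the paper)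
and `chainK ι p (ℓ+1)` (i.e. `K_{ℓ+2}`) consists of those `k ∈ chainK ι p ℓ` for which the
`k`-th homogeneous coordinate of the `chainK ι p ℓ`-component of `p` vanishes. -/
def chainK (ι : Type) (p : PSp ι) : ℕ → Set ι
  | 0 => Set.univ
  | ℓ + 1 => {k ∈ chainK ι p ℓ | pcoord ι p (chainK ι p ℓ) k = 0}

/-- A chain of subsets `ι = K 0 ⊋ K 1 ⊋ ⋯ ⊋ K m = ∅` (written `K₁ ⊋ ⋯ ⊋ K_{m+1}` in
the paper); we extend it by `∅` beyond the `m`-th step so that it is determined by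
the function `K`. -/
structure SubsetChain (ι : Type) where
  m : ℕ
  K : ℕ → Set ι
  first : K 0 = Set.univ
  strict : ∀ ℓ < m, K (ℓ + 1) ⊂ K ℓ
  last : K m = ∅
  beyond : ∀ ℓ, m ≤ ℓ → K ℓ = ∅

/-- The piece `O_{K₁,…,K_{m+1}}` of `Y`: those points of `Y` whose chain is the given one. -/
def Ochain (ι : Type) (c : SubsetChain ι) : Set (PSp ι) :=
  {p ∈ Yn ι | ∀ ℓ ≤ c.m, chainK ι p ℓ = c.K ℓ}

/-- The subset `D_{K₁,…,K_{m+1}}` of `Y`: the points whose `K_ℓ`-component has vanishing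
coordinates indexed by `K_{ℓ+1}`. -/
def Dchain (ι : Type) (c : SubsetChain ι) : Set (PSp ι) :=
  {p ∈ Yn ι | ∀ ℓ < c.m, ∀ k ∈ c.K (ℓ + 1), pcoord ι p (c.K ℓ) k = 0}

/-- The action of an element of the torus on a point of `P`:
`[a]·([b_i]_{i ∈ I})_I = ([a_i b_i]_{i ∈ I})_I`. -/
def act (ι : Type) (t : ↥(torusSet ι)) (p : PSp ι) : PSp ι := fun I =>
  Projectivization.mk ℂ (fun i : ↥I.1 => t.1.rep i.1 * (p I).rep i) <| by
    intro h0
    obtain ⟨i, hi⟩ := Function.ne_iff.mp (Projectivization.rep_nonzero (p I))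
    have h : t.1.rep i.1 * (p I).rep i = 0 := by simpa using congrFun h0 i
    exact mul_ne_zero (t.2 i.1) (by simpa using hi) h

/-- The action of a permutation `w` of `ι` on `P`: the `w(I)`-component of `w·p` is
`[a^I_{w⁻¹(j)}]_{j ∈ w(I)}`; equivalently the `J`-component of `w·p` is
`[a^{w⁻¹(J)}_{w⁻¹(j)}]_{j ∈ J}`. -/
def permAct (ι : Type) (w : Equiv.Perm ι) (p : PSp ι) : PSp ι := fun J =>
  Projectivization.mk ℂ (fun j : ↥J.1 => pcoord ι p (⇑(w⁻¹) '' J.1) (w⁻¹ j.1)) <| by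
    have hK : ((⇑(w⁻¹) : ι → ι) '' J.1).Nonempty := J.2.image _
    obtain ⟨i, hi, hne⟩ := pcoord_exists_ne ι p _ hK
    obtain ⟨j, hj, hji⟩ := hi
    intro h0
    apply hne
    have h := congrFun h0 ⟨j, hj⟩
    simpa [hji] using h

namespace Projectivization

variable {K V : Type*} [DivisionRing K] [AddCommGroup V] [Module K V] [TopologicalSpace V]
  [ContinuousConstSMul K V]

theorem isOpenQuotientMap_mk' : IsOpenQuotientMap (Projectivization.mk' K (V := V)) := by
  refine ⟨Quotient.mk''_surjective, continuous_quot_mk, fun U hU => ?_⟩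
  have hsat : mk' K ⁻¹' (mk' K '' U) =
      ⋃ a : Kˣ, (fun v : {v : V // v ≠ 0} => (⟨a • v.1, smul_ne_zero_iff_ne a |>.2 v.2⟩ :
        {v : V // v ≠ 0})) ⁻¹' U := by
    ext v
    simp only [Set.mem_preimage, Set.mem_image, Set.mem_iUnion, mk'_eq_mk, mk_eq_mk_iff]
    constructor
    · rintro ⟨u, hu, a, hau⟩
      exact ⟨a, (Subtype.ext hau : (⟨a • v.1, _⟩ : {v : V // v ≠ 0}) = u) ▸ hu⟩
    · rintro ⟨a, ha⟩
      exact ⟨_, ha, a, rfl⟩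
  change IsOpen (mk' K ⁻¹' (mk' K '' U))
  rw [hsat]
  exact isOpen_iUnion fun a =>
    hU.preimage (((continuous_const_smul (a : K)).comp continuous_subtype_val).subtype_mk _)

end Projectivization

section Vectors

variable {ι : Type}

def PSp.mkVec (v : (I : NES ι) → {f : ↥I.1 → ℂ // f ≠ 0}) : PSp ι := fun I => mk' ℂ (v I)

theorem PSp.isOpenQuotientMap_mkVec : IsOpenQuotientMap (PSp.mkVec (ι := ι)) :=
  IsOpenQuotientMap.piMap fun _ => isOpenQuotientMap_mk'

end Vectors

section Coordinates

variable {ι : Type}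

theorem pcoord_of_mem (p : PSp ι) (I : NES ι) {i : ι} (hi : i ∈ I.1) :
    pcoord ι p I.1 i = (p I).rep ⟨i, hi⟩ := by
  rw [pcoord, dif_pos ⟨I.2, hi⟩]

theorem pcoord_eq_of_eq_mk {p : PSp ι} {I : NES ι} {f : ↥I.1 → ℂ} {hf : f ≠ 0}
    (h : p I = mk ℂ f hf) : ∃ a : ℂˣ, ∀ i (hi : i ∈ I.1), pcoord ι p I.1 i = a * f ⟨i, hi⟩ := by
  obtain ⟨a, ha⟩ := exists_smul_eq_mk_rep ℂ f hf
  exact ⟨a, fun i hi => by rw [pcoord_of_mem p I hi, h, ← ha]; rfl⟩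

theorem mk_mem_torusSet {τ : ι → ℂ} (hτ : ∀ i, τ i ≠ 0) (hτ0 : τ ≠ 0) :
    mk ℂ τ hτ0 ∈ torusSet ι := by
  obtain ⟨a, ha⟩ := exists_smul_eq_mk_rep ℂ τ hτ0
  intro i
  rw [← ha]
  exact smul_ne_zero a.ne_zero (hτ i)

theorem act_apply_eq_mk {t : ↥(torusSet ι)} {τ : ι → ℂ} {hτ : τ ≠ 0} (ht : t.1 = mk ℂ τ hτ)
    {p : PSp ι} {I : NES ι} {f : ↥I.1 → ℂ} {hf : f ≠ 0} (hp : p I = mk ℂ f hf)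
    (h : (fun i : ↥I.1 => τ i * f i) ≠ 0) : act ι t p I = mk ℂ (fun i : ↥I.1 => τ i * f i) h := by
  obtain ⟨a, ha⟩ := exists_smul_eq_mk_rep ℂ τ hτ
  obtain ⟨b, hb⟩ := exists_smul_eq_mk_rep ℂ f hf
  refine (mk_eq_mk_iff' ℂ _ _ _ h).2 ⟨a * b, funext fun i => ?_⟩
  simp only [ht, hp, ← ha, ← hb, Pi.smul_apply, Units.smul_def, smul_eq_mul]
  ring

theorem rho_apply_eq_mk {x : ↥(torusSet ι)} {τ : ι → ℂ} {hτ : τ ≠ 0} (hx : x.1 = mk ℂ τ hτ)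
    (I : NES ι) (h : (fun i : ↥I.1 => τ i) ≠ 0) : rho ι x I = mk ℂ (fun i : ↥I.1 => τ i) h := by
  obtain ⟨a, ha⟩ := exists_smul_eq_mk_rep ℂ τ hτ
  refine (mk_eq_mk_iff ℂ _ _ _ h).2 ⟨a, funext fun i => ?_⟩
  simp only [hx, ← ha, Pi.smul_apply]

end Coordinates

section Action

variable {ι : Type}

theorem mul_ne_zero_of_forall_ne_zero {α M₀ : Type*} [MulZeroClass M₀] [NoZeroDivisors M₀]
    {τ f : α → M₀} (hτ : ∀ i, τ i ≠ 0) (hf : f ≠ 0) : (fun i => τ i * f i) ≠ 0 := fun h =>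
  hf <| funext fun i => (mul_eq_zero.1 (congrFun h i)).resolve_left (hτ i)

theorem restrict_ne_zero {M : Type*} [Zero M] (I : NES ι) {τ : ι → M} (hτ : ∀ i, τ i ≠ 0) :
    (fun i : ↥I.1 => τ i) ≠ 0 := fun h =>
  hτ I.2.some (congrFun h ⟨_, I.2.some_mem⟩)

theorem act_rho_mem_range (t x : ↥(torusSet ι)) : act ι t (rho ι x) ∈ Set.range (rho ι) := by
  have hne := mul_ne_zero_of_forall_ne_zero t.2 x.1.rep_nonzero
  refine ⟨⟨mk ℂ _ hne, mk_mem_torusSet (fun i => mul_ne_zero (t.2 i) (x.2 i)) hne⟩, ?_⟩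
  funext I
  rw [rho_apply_eq_mk rfl, act_apply_eq_mk (mk_rep t.1).symm rfl]
  exact restrict_ne_zero I fun i => mul_ne_zero (t.2 i) (x.2 i)

theorem continuous_act (t : ↥(torusSet ι)) : Continuous (act ι t) := by
  have hF := PSp.isOpenQuotientMap_mkVec (ι := ι)
  let scale (v : (I : NES ι) → {f : ↥I.1 → ℂ // f ≠ 0}) (I : NES ι) :
      {f : ↥I.1 → ℂ // f ≠ 0} :=
    ⟨fun i => t.1.rep i * (v I).1 i, mul_ne_zero_of_forall_ne_zero (fun i => t.2 i) (v I).2⟩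
  have hcomm : act ι t ∘ PSp.mkVec = PSp.mkVec ∘ scale :=
    funext fun v => funext fun I => act_apply_eq_mk (mk_rep t.1).symm rfl _
  rw [hF.isQuotientMap.continuous_iff, hcomm]
  refine hF.continuous.comp <| continuous_pi fun I => Continuous.subtype_mk ?_ _
  exact continuous_pi fun i => continuous_const.mul
    ((continuous_apply i).comp (continuous_subtype_val.comp (continuous_apply I)))

theorem act_mem_Yn (t : ↥(torusSet ι)) {p : PSp ι} (hp : p ∈ Yn ι) : act ι t p ∈ Yn ι :=
  map_mem_closure (continuous_act t) hp fun _ ⟨x, hx⟩ => hx ▸ act_rho_mem_range t x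

theorem pcoord_act_eq_zero_iff (t : ↥(torusSet ι)) (p : PSp ι) (K : Set ι) (i : ι) :
    pcoord ι (act ι t p) K i = 0 ↔ pcoord ι p K i = 0 := by
  by_cases h : K.Nonempty ∧ i ∈ K
  · obtain ⟨hK, hi⟩ := h
    obtain ⟨a, ha⟩ := pcoord_eq_of_eq_mk
      (act_apply_eq_mk (mk_rep t.1).symm (mk_rep (p ⟨K, hK⟩)).symm
        (mul_ne_zero_of_forall_ne_zero (fun i => t.2 i) (rep_nonzero _)))
    rw [ha i hi, pcoord_of_mem p ⟨K, hK⟩ hi]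
    simp [a.ne_zero, t.2 i]
  · simp only [pcoord, dif_neg h]

theorem chainK_act (t : ↥(torusSet ι)) (p : PSp ι) : chainK ι (act ι t p) = chainK ι p := by
  funext ℓ
  induction ℓ with
  | zero => rfl
  | succ ℓ ih => simp only [chainK, ih, pcoord_act_eq_zero_iff]

end Action

section Compatible

variable {ι : Type}

/-- Where the `J`-component does not vanish on `I ⊆ J`, these relations force the
`I`-component to be its restriction to `I`. -/
def compatibleLocus (ι : Type) : Set (PSp ι) :=
  {p | ∀ (I : NES ι) (J : Set ι), I.1 ⊆ J → ∀ i ∈ I.1, ∀ j ∈ I.1,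
    pcoord ι p I.1 i * pcoord ι p J j = pcoord ι p I.1 j * pcoord ι p J i}

theorem range_rho_subset_compatibleLocus : Set.range (rho ι) ⊆ compatibleLocus ι := by
  rintro _ ⟨x, rfl⟩ I J hIJ i hi j hj
  obtain ⟨a, ha⟩ := pcoord_eq_of_eq_mk (p := rho ι x) (I := I) rfl
  obtain ⟨b, hb⟩ := pcoord_eq_of_eq_mk (p := rho ι x) (I := ⟨J, I.2.mono hIJ⟩) rfl
  rw [ha i hi, ha j hj, hb i (hIJ hi), hb j (hIJ hj)]
  ring

theorem isClosed_compatibleLocus : IsClosed (compatibleLocus ι) := by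
  simp only [compatibleLocus, Set.ofPred_forall]
  refine isClosed_iInter fun I => isClosed_iInter fun J => isClosed_iInter fun hIJ =>
    isClosed_iInter fun i => isClosed_iInter fun hi => isClosed_iInter fun j =>
    isClosed_iInter fun hj => ?_
  rw [← PSp.isOpenQuotientMap_mkVec.isQuotientMap.isClosed_preimage]
  have hJ : J.Nonempty := I.2.mono hIJ
  have hpre : PSp.mkVec ⁻¹' {p | pcoord ι p I.1 i * pcoord ι p J j =
        pcoord ι p I.1 j * pcoord ι p J i} =
      {v | (v I).1 ⟨i, hi⟩ * (v ⟨J, hJ⟩).1 ⟨j, hIJ hj⟩ =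
        (v I).1 ⟨j, hj⟩ * (v ⟨J, hJ⟩).1 ⟨i, hIJ hi⟩} := by
    ext v
    obtain ⟨a, ha⟩ := pcoord_eq_of_eq_mk (p := PSp.mkVec v) (I := I) rfl
    obtain ⟨b, hb⟩ := pcoord_eq_of_eq_mk (p := PSp.mkVec v) (I := ⟨J, hJ⟩) rfl
    simp only [Set.mem_preimage, Set.mem_ofPred_eq, ha i hi, ha j hj, hb i (hIJ hi),
      hb j (hIJ hj)]
    have hab : (a : ℂ) * b ≠ 0 := mul_ne_zero a.ne_zero b.ne_zero
    constructor
    · intro h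
      apply mul_left_cancel₀ hab
      linear_combination h
    · intro h
      linear_combination (a : ℂ) * b * h
  have hcoord (K : NES ι) (k : ↥K.1) :
      Continuous fun v : (K : NES ι) → {f : ↥K.1 → ℂ // f ≠ 0} => (v K).1 k :=
    (continuous_apply k).comp (continuous_subtype_val.comp (continuous_apply K))
  rw [hpre]
  exact isClosed_eq ((hcoord _ _).mul (hcoord _ _)) ((hcoord _ _).mul (hcoord _ _))

theorem Yn_subset_compatibleLocus : Yn ι ⊆ compatibleLocus ι :=
  closure_minimal range_rho_subset_compatibleLocus isClosed_compatibleLocus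

theorem apply_eq_mk_pcoord_of_subset {p : PSp ι} (hp : p ∈ compatibleLocus ι) {I : NES ι}
    {J : Set ι} (hIJ : I.1 ⊆ J) {i₀ : ι} (hi₀ : i₀ ∈ I.1) (h₀ : pcoord ι p J i₀ ≠ 0) :
    p I = mk ℂ (fun i : ↥I.1 => pcoord ι p J i) fun h => h₀ (congrFun h ⟨i₀, hi₀⟩) := by
  conv_lhs => rw [← mk_rep (p I)]
  refine (mk_eq_mk_iff' ℂ _ _ _ _).2 ⟨pcoord ι p I.1 i₀ / pcoord ι p J i₀, funext fun i => ?_⟩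
  have hrel := hp I J hIJ i i.2 i₀ hi₀
  rw [pcoord_of_mem p I i.2] at hrel
  simp only [Pi.smul_apply, smul_eq_mul]
  field_simp
  linear_combination -hrel

end Compatible

section Chains

variable {ι : Type}

theorem chainK_antitone (p : PSp ι) : Antitone (chainK ι p) :=
  antitone_nat_of_succ_le fun _ _ hk => hk.1

theorem mem_chainK_succ_iff {p : PSp ι} {K : ℕ → Set ι} (hK : chainK ι p = K) {ℓ : ℕ} {i : ι} :
    i ∈ K (ℓ + 1) ↔ i ∈ K ℓ ∧ pcoord ι p (K ℓ) i = 0 := by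
  subst hK
  rfl

theorem chainK_succ_ssubset (p : PSp ι) {ℓ : ℕ} (h : (chainK ι p ℓ).Nonempty) :
    chainK ι p (ℓ + 1) ⊂ chainK ι p ℓ := by
  obtain ⟨i, hi, hne⟩ := pcoord_exists_ne ι p _ h
  exact ⟨chainK_antitone p ℓ.le_succ, fun hsub => hne (hsub hi).2⟩

theorem exists_chainK_eq_empty [Finite ι] (p : PSp ι) : ∃ ℓ, chainK ι p ℓ = ∅ := by
  by_contra! h
  have hanti : StrictAnti (chainK ι p) :=
    strictAnti_nat_of_succ_lt fun ℓ => chainK_succ_ssubset p (h ℓ)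
  exact not_injective_infinite_finite _ hanti.injective

theorem exists_subset_and_not_subset_succ {K : ℕ → Set ι} (h₀ : K 0 = Set.univ) {N : ℕ}
    (hN : K N = ∅) {I : Set ι} (hI : I.Nonempty) : ∃ ℓ, I ⊆ K ℓ ∧ ¬ I ⊆ K (ℓ + 1) := by
  by_contra! h
  have hsub : ∀ ℓ, I ⊆ K ℓ := fun ℓ => ℓ.rec (h₀ ▸ Set.subset_univ I) h
  exact hI.ne_empty (Set.subset_empty_iff.1 (hN ▸ hsub N))

theorem exists_pcoord_eq_mul_of_chainK_eq [Finite ι] {p q : PSp ι}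
    (hpq : chainK ι p = chainK ι q) (i : ι) :
    ∃ s ≠ 0, ∀ ℓ, i ∈ chainK ι p ℓ →
      pcoord ι q (chainK ι p ℓ) i = s * pcoord ι p (chainK ι p ℓ) i := by
  obtain ⟨N, hN⟩ := exists_chainK_eq_empty p
  obtain ⟨ℓ₀, hi₀, hi₀'⟩ := exists_subset_and_not_subset_succ rfl hN (Set.singleton_nonempty i)
  rw [Set.singleton_subset_iff] at hi₀ hi₀'
  have hp₀ : pcoord ι p (chainK ι p ℓ₀) i ≠ 0 := fun h => hi₀' ⟨hi₀, h⟩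
  have hq₀ : pcoord ι q (chainK ι p ℓ₀) i ≠ 0 := fun h =>
    hi₀' ((mem_chainK_succ_iff hpq.symm).2 ⟨hi₀, h⟩)
  refine ⟨_, div_ne_zero hq₀ hp₀, fun ℓ hi => ?_⟩
  by_cases hi' : i ∈ chainK ι p (ℓ + 1)
  · rw [((mem_chainK_succ_iff rfl).1 hi').2, ((mem_chainK_succ_iff hpq.symm).1 hi').2, mul_zero]
  · -- `ℓ₀` is the last index of the chain containing `i`, and so is `ℓ`
    have h₁ : ℓ < ℓ₀ + 1 := lt_of_not_ge fun h => hi₀' (chainK_antitone p h hi)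
    have h₂ : ℓ₀ < ℓ + 1 := lt_of_not_ge fun h => hi' (chainK_antitone p h hi₀)
    obtain rfl : ℓ = ℓ₀ := by omega
    rw [div_mul_cancel₀ _ hp₀]

theorem exists_act_eq_of_chainK_eq [Finite ι] [Nonempty ι] {p q : PSp ι}
    (hp : p ∈ compatibleLocus ι) (hq : q ∈ compatibleLocus ι) (hpq : chainK ι p = chainK ι q) :
    ∃ t : ↥(torusSet ι), act ι t p = q := by
  choose τ hτ hτq using exists_pcoord_eq_mul_of_chainK_eq hpq
  have hτ0 : τ ≠ 0 := fun h => hτ (Classical.arbitrary ι) (congrFun h _)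
  refine ⟨⟨mk ℂ τ hτ0, mk_mem_torusSet hτ hτ0⟩, funext fun I => ?_⟩
  obtain ⟨N, hN⟩ := exists_chainK_eq_empty p
  obtain ⟨ℓ, hIℓ, hIℓ'⟩ := exists_subset_and_not_subset_succ rfl hN I.2
  obtain ⟨i₀, hi₀, hi₀'⟩ := Set.not_subset.1 hIℓ'
  have hp₀ : pcoord ι p (chainK ι p ℓ) i₀ ≠ 0 := fun h => hi₀' ⟨hIℓ hi₀, h⟩
  have hq₀ : pcoord ι q (chainK ι p ℓ) i₀ ≠ 0 := by
    rw [hτq i₀ ℓ (hIℓ hi₀)]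
    exact mul_ne_zero (hτ i₀) hp₀
  rw [apply_eq_mk_pcoord_of_subset hq hIℓ hi₀ hq₀,
    act_apply_eq_mk rfl (apply_eq_mk_pcoord_of_subset hp hIℓ hi₀ hp₀)]
  · congr 1
    funext i
    exact (hτq i ℓ (hIℓ i.2)).symm
  · exact mul_ne_zero_of_forall_ne_zero (fun i => hτ i) fun h => hp₀ (congrFun h ⟨i₀, hi₀⟩)

end Chains

section Orbits

variable {ι : Type}

open Classical in
def chainOf [Finite ι] (p : PSp ι) : SubsetChain ι where
  m := Nat.find (exists_chainK_eq_empty p)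
  K := chainK ι p
  first := rfl
  strict _ hℓ := chainK_succ_ssubset p (Set.nonempty_iff_ne_empty.2 (Nat.find_min _ hℓ))
  last := Nat.find_spec (exists_chainK_eq_empty p)
  beyond _ hℓ := Set.subset_empty_iff.1
    (Nat.find_spec (exists_chainK_eq_empty p) ▸ chainK_antitone p hℓ)

theorem mem_Ochain_iff {c : SubsetChain ι} {p : PSp ι} :
    p ∈ Ochain ι c ↔ p ∈ Yn ι ∧ chainK ι p = c.K := by
  refine ⟨fun ⟨hY, h⟩ => ⟨hY, funext fun ℓ => ?_⟩, fun ⟨hY, h⟩ => ⟨hY, fun ℓ _ => h ▸ rfl⟩⟩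
  rcases le_or_gt ℓ c.m with hℓ | hℓ
  · exact h ℓ hℓ
  · rw [c.beyond ℓ hℓ.le]
    exact Set.subset_empty_iff.1 (c.last ▸ h c.m le_rfl ▸ chainK_antitone p hℓ.le)

theorem mem_Ochain_chainOf [Finite ι] {p : PSp ι} (hp : p ∈ Yn ι) : p ∈ Ochain ι (chainOf p) :=
  ⟨hp, fun _ _ => rfl⟩

theorem nonempty_of_mem_Yn {p : PSp ι} (hp : p ∈ Yn ι) : Nonempty ι := by
  obtain ⟨_, x, rfl⟩ := closure_nonempty_iff.1 ⟨p, hp⟩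
  exact ⟨(Function.ne_iff.1 x.1.rep_nonzero).choose⟩

theorem act_mem_Ochain (c : SubsetChain ι) (t : ↥(torusSet ι)) {p : PSp ι}
    (hp : p ∈ Ochain ι c) : act ι t p ∈ Ochain ι c := by
  rw [mem_Ochain_iff, chainK_act] at *
  exact ⟨act_mem_Yn t hp.1, hp.2⟩

theorem exists_act_eq_of_mem_Ochain [Finite ι] {c : SubsetChain ι} {p q : PSp ι}
    (hp : p ∈ Ochain ι c) (hq : q ∈ Ochain ι c) : ∃ t : ↥(torusSet ι), act ι t p = q := by
  have := nonempty_of_mem_Yn hp.1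
  rw [mem_Ochain_iff] at hp hq
  exact exists_act_eq_of_chainK_eq (Yn_subset_compatibleLocus hp.1)
    (Yn_subset_compatibleLocus hq.1) (hp.2.trans hq.2.symm)

theorem setOf_act_eq_Ochain [Finite ι] {c : SubsetChain ι} {p : PSp ι}
    (hp : p ∈ Ochain ι c) : {q | ∃ t : ↥(torusSet ι), act ι t p = q} = Ochain ι c :=
  Set.Subset.antisymm (by rintro _ ⟨t, rfl⟩; exact act_mem_Ochain c t hp)
    fun _ hq => exists_act_eq_of_mem_Ochain hp hq

end Orbits

theorem stmt2_general (n : ℕ) :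
    (∀ c : SubsetChain (Fin n), ∀ t : ↥(torusSet (Fin n)), ∀ p ∈ Ochain (Fin n) c,
      act (Fin n) t p ∈ Ochain (Fin n) c) ∧
    (∀ c : SubsetChain (Fin n), ∀ p ∈ Ochain (Fin n) c, ∀ q ∈ Ochain (Fin n) c,
      ∃ t : ↥(torusSet (Fin n)), act (Fin n) t p = q) ∧
    (∀ p ∈ Yn (Fin n), ∃ c : SubsetChain (Fin n),
      {q | ∃ t : ↥(torusSet (Fin n)), act (Fin n) t p = q} = Ochain (Fin n) c) ∧
    (∀ c : SubsetChain (Fin n), (Ochain (Fin n) c).Nonempty →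
      ∃ p ∈ Yn (Fin n),
        Ochain (Fin n) c = {q | ∃ t : ↥(torusSet (Fin n)), act (Fin n) t p = q}) :=
  ⟨fun c t _ hp => act_mem_Ochain c t hp,
    fun _ _ hp _ hq => exists_act_eq_of_mem_Ochain hp hq,
    fun _ hp => ⟨chainOf _, setOf_act_eq_Ochain (mem_Ochain_chainOf hp)⟩,
    fun _ ⟨p, hp⟩ => ⟨p, hp.1, (setOf_act_eq_Ochain hp).symm⟩⟩

/-- Proposition 2.7 (Proposition `orbitprop`): each piece `O_{K₁,…,K_{m+1}}` is stable
under the torus action and the torus acts transitively on it; consequently, the orbit of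
any point of `Y_n` is one of the pieces `O_{K₁,…,K_{m+1}}`, and every nonempty piece
`O_{K₁,…,K_{m+1}}` is an orbit. -/
theorem stmt2 (n : ℕ) (hn : 1 ≤ n) :
    (∀ c : SubsetChain (Fin n), ∀ t : ↥(torusSet (Fin n)), ∀ p ∈ Ochain (Fin n) c,
      act (Fin n) t p ∈ Ochain (Fin n) c) ∧
    (∀ c : SubsetChain (Fin n), ∀ p ∈ Ochain (Fin n) c, ∀ q ∈ Ochain (Fin n) c,
      ∃ t : ↥(torusSet (Fin n)), act (Fin n) t p = q) ∧
    (∀ p ∈ Yn (Fin n), ∃ c : SubsetChain (Fin n),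
      {q | ∃ t : ↥(torusSet (Fin n)), act (Fin n) t p = q} = Ochain (Fin n) c) ∧
    (∀ c : SubsetChain (Fin n), (Ochain (Fin n) c).Nonempty →
      ∃ p ∈ Yn (Fin n),
        Ochain (Fin n) c = {q | ∃ t : ↥(torusSet (Fin n)), act (Fin n) t p = q}) :=
  stmt2_general n
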